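/- arXiv:2307.15910 — 4 statements merged into one kernel-verified Lean document; each statement's English description precedes it below -/
import Mathlib

section
/- (Lemma 1) If Δ is an admissible kernel and π is a κ-greedy policy, then v_π k s ≥ g k s for all k : ℕ and s : S; i.e., the probability of reaching the accepting set F within the remaining k steps under the greedy policy π_C is bounded below by the worst-case value function g. -/
open Finset
open scoped Classical

/-- The feasible set of transition-probability vectors at state `s` under action `a`. -/
def Feas {S A : Type*} [Fintype S] (Δmin Δmax : S → A → S → ℝ) (s : S) (a : A) :
    Set (S → ℝ) :=
  {x | (∀ s', Δmin s a s' ≤ x s' ∧ x s' ≤ Δmax s a s') ∧ ∑ s', x s' = 1}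

/-- Worst-case one-step value of `h` over the feasible set. -/
noncomputable def kappaOf {S A : Type*} [Fintype S] (Δmin Δmax : S → A → S → ℝ)
    (h : S → ℝ) (s : S) (a : A) : ℝ :=
  sInf ((fun x : S → ℝ => ∑ s', h s' * x s') '' Feas Δmin Δmax s a)

/-- The worst-case satisfaction lower bound `g`, indexed by remaining time. -/
noncomputable def gval {S A : Type*} [Fintype S] [Fintype A] [Nonempty A]
    (Δmin Δmax : S → A → S → ℝ) (F : Finset S) : ℕ → S → ℝ
  | 0 => fun s => if s ∈ F then 1 else 0
  | (k+1) => fun s =>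
      Finset.univ.sup' Finset.univ_nonempty
        (fun a : A => kappaOf Δmin Δmax (gval Δmin Δmax F k) s a)

/-- `κ k s a`: worst-case optimization value at remaining time `k`. -/
noncomputable def kappa {S A : Type*} [Fintype S] [Fintype A] [Nonempty A]
    (Δmin Δmax : S → A → S → ℝ) (F : Finset S) (k : ℕ) (s : S) (a : A) : ℝ :=
  kappaOf Δmin Δmax (gval Δmin Δmax F k) s a

/-- A transition kernel is admissible if it lies in the feasible set everywhere. -/
def Admissible {S A : Type*} [Fintype S] (Δmin Δmax Δ : S → A → S → ℝ) : Prop :=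
  ∀ s a, Δ s a ∈ Feas Δmin Δmax s a

/-- Success probability of reaching `F` within the remaining time under policy `π`. -/
noncomputable def vpi {S A : Type*} [Fintype S] (Δ : S → A → S → ℝ) (F : Finset S)
    (π : ℕ → S → A) : ℕ → S → ℝ
  | 0 => fun s => if s ∈ F then 1 else 0
  | (k+1) => fun s => ∑ s', Δ s (π (k+1) s) s' * vpi Δ F π k s'

/-- A policy is κ-greedy if its action attains the max in the recursion for `g`. -/
def Greedy {S A : Type*} [Fintype S] [Fintype A] [Nonempty A]
    (Δmin Δmax : S → A → S → ℝ) (F : Finset S) (π : ℕ → S → A) : Prop :=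
  ∀ k s, kappa Δmin Δmax F k s (π (k+1) s) = gval Δmin Δmax F (k+1) s

/-- `Act Δmin Δmax F p k s` is the pruned action set at remaining time `k+1`
(written `Act (k+1) s` in the paper): actions whose every possibly-reached
successor `s'` (i.e. `Δmax s a s' > 0`) satisfies `g k s' ≥ p`. -/
def Act {S A : Type*} [Fintype S] [Fintype A] [Nonempty A]
    (Δmin Δmax : S → A → S → ℝ) (F : Finset S) (p : ℝ) (k : ℕ) (s : S) : Set A :=
  {a | ∀ s', 0 < Δmax s a s' → p ≤ gval Δmin Δmax F k s'}


/-!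
Induction on the remaining time. Under the greedy action `a = π (k+1) s`, the value `g (k+1) s`
equals `κ k s a`, an infimum over `Feas s a`; the true row `Δ s a` is feasible, so this is at most
`∑ g k s' * Δ s a s'`, which the induction hypothesis and `Δ ≥ 0` bound by `v_π (k+1) s`.
-/

section

variable {S A : Type*} [Fintype S] {Δmin Δmax : S → A → S → ℝ} {s : S} {a : A}

lemma nonneg_of_mem_feas (hmin : ∀ s', 0 ≤ Δmin s a s') {x : S → ℝ}
    (hx : x ∈ Feas Δmin Δmax s a) : 0 ≤ x :=
  fun s' => (hmin s').trans (hx.1 s').1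

-- Without this lower bound `sInf` in `kappaOf` would be the junk value `0`.
lemma zero_mem_lowerBounds_feas_image {h : S → ℝ} (hh : 0 ≤ h) (hmin : ∀ s', 0 ≤ Δmin s a s') :
    0 ∈ lowerBounds ((fun x : S → ℝ => ∑ s', h s' * x s') '' Feas Δmin Δmax s a) := by
  rintro _ ⟨x, hx, rfl⟩
  exact sum_nonneg fun s' _ => mul_nonneg (hh s') (nonneg_of_mem_feas hmin hx s')

lemma kappaOf_nonneg {h : S → ℝ} (hh : 0 ≤ h) (hmin : ∀ s', 0 ≤ Δmin s a s') :
    0 ≤ kappaOf Δmin Δmax h s a :=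
  Real.sInf_nonneg fun _ hy => zero_mem_lowerBounds_feas_image hh hmin hy

lemma kappaOf_le_of_mem_feas {h : S → ℝ} (hh : 0 ≤ h) (hmin : ∀ s', 0 ≤ Δmin s a s')
    {x : S → ℝ} (hx : x ∈ Feas Δmin Δmax s a) :
    kappaOf Δmin Δmax h s a ≤ ∑ s', h s' * x s' :=
  csInf_le ⟨0, zero_mem_lowerBounds_feas_image hh hmin⟩ (Set.mem_image_of_mem _ hx)

lemma gval_nonneg [Fintype A] [Nonempty A] (hmin : ∀ s a s', 0 ≤ Δmin s a s') (F : Finset S) :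
    ∀ k, 0 ≤ gval Δmin Δmax F k
  | 0 => fun s => by by_cases hs : s ∈ F <;> simp [gval, hs]
  | k + 1 => fun s =>
      le_sup'_of_le _ (mem_univ (Classical.arbitrary A))
        (kappaOf_nonneg (gval_nonneg hmin F k) (hmin s _))

end

theorem greedy_policy_dominates_g_general {S A : Type*} [Fintype S] [Fintype A]
    [Nonempty A]
    (Δmin Δmax : S → A → S → ℝ)
    (hbounds : ∀ s a s', 0 ≤ Δmin s a s' ∧ Δmin s a s' ≤ Δmax s a s')
    (F : Finset S) (Δ : S → A → S → ℝ) (hΔ : Admissible Δmin Δmax Δ)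
    (π : ℕ → S → A) (hπ : Greedy Δmin Δmax F π) :
    ∀ (k : ℕ) (s : S), gval Δmin Δmax F k s ≤ vpi Δ F π k s := by
  have hmin : ∀ s a s', 0 ≤ Δmin s a s' := fun s a s' => (hbounds s a s').1
  intro k
  induction k with
  | zero => exact fun _ => le_rfl
  | succ k ih =>
    intro s
    set a := π (k + 1) s
    calc gval Δmin Δmax F (k + 1) s = kappa Δmin Δmax F k s a := (hπ k s).symm
      _ ≤ ∑ s', gval Δmin Δmax F k s' * Δ s a s' :=
        kappaOf_le_of_mem_feas (gval_nonneg hmin F k) (hmin s a) (hΔ s a)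
      _ ≤ ∑ s', vpi Δ F π k s' * Δ s a s' := by
        gcongr with s'
        · exact nonneg_of_mem_feas (hmin s a) (hΔ s a) s'
        · exact ih s'
      _ = vpi Δ F π (k + 1) s := sum_congr rfl fun _ _ => mul_comm _ _

/-- Lemma 1: under an admissible kernel, a κ-greedy policy
reaches the accepting set within the remaining `k` steps with probability
at least the worst-case value `g k s`. -/
theorem greedy_policy_dominates_g {S A : Type*} [Fintype S] [Fintype A]
    [Nonempty S] [Nonempty A]
    (Δmin Δmax : S → A → S → ℝ)
    (hbounds : ∀ s a s', 0 ≤ Δmin s a s' ∧ Δmin s a s' ≤ Δmax s a s')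
    (F : Finset S) (Δ : S → A → S → ℝ) (hΔ : Admissible Δmin Δmax Δ)
    (π : ℕ → S → A) (hπ : Greedy Δmin Δmax F π) :
    ∀ (k : ℕ) (s : S), gval Δmin Δmax F k s ≤ vpi Δ F π k s :=
  greedy_policy_dominates_g_general Δmin Δmax hbounds F Δ hΔ π hπ
end

section
/- If Δ is an admissible kernel and π is a κ-greedy policy, then for all k : ℕ and s : S, ∑_{s'} g k s' * Δ s (π (k+1) s) s' ≥ g (k+1) s; i.e., the one-step expectation of g under the true kernel and the greedy action dominates the worst-case value at the current state. -/
open Finset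
open scoped Classical

/-- for an admissible kernel and a κ-greedy policy, the one-step
expectation of `g` under the true kernel and the greedy action dominates the
worst-case value at the current state. -/
theorem greedy_one_step_dominates {S A : Type*} [Fintype S] [Fintype A]
    [Nonempty S] [Nonempty A]
    (Δmin Δmax : S → A → S → ℝ)
    (hbounds : ∀ s a s', 0 ≤ Δmin s a s' ∧ Δmin s a s' ≤ Δmax s a s')
    (F : Finset S) (Δ : S → A → S → ℝ) (hΔ : Admissible Δmin Δmax Δ)
    (π : ℕ → S → A) (hπ : Greedy Δmin Δmax F π) :
    ∀ (k : ℕ) (s : S),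
      gval Δmin Δmax F (k+1) s ≤
        ∑ s', gval Δmin Δmax F k s' * Δ s (π (k+1) s) s' := by
  intro k s
  set a := π (k+1) s
  rw [← hπ k s]
  apply csInf_le
  · refine ⟨-∑ s', |gval Δmin Δmax F k s'| * Δmax s a s', ?_⟩
    rintro y ⟨x, ⟨hx1, _⟩, rfl⟩
    simp only [neg_le, ← Finset.sum_neg_distrib]
    apply Finset.sum_le_sum
    intro s' _
    have h1 := (hx1 s').1
    have h2 := (hx1 s').2
    have h0 : 0 ≤ x s' := le_trans (hbounds s a s').1 h1
    rw [neg_le_iff_add_nonneg, ← neg_le_iff_add_nonneg']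
    calc -(gval Δmin Δmax F k s' * x s') ≤ |gval Δmin Δmax F k s'| * x s' := by
          rw [← neg_mul]
          exact mul_le_mul_of_nonneg_right (neg_le_abs _) h0
      _ ≤ |gval Δmin Δmax F k s'| * Δmax s a s' :=
          mul_le_mul_of_nonneg_left h2 (abs_nonneg _)
  · exact ⟨Δ s a, hΔ s a, rfl⟩
end

section
/- (Theorem 1, Case (a)) Let p ∈ (0,1], let Δ be an admissible kernel, and let π be a policy such that for every k : ℕ and every s : S with g (k+1) s ≥ p, the action π (k+1) s belongs to the pruned action set Act (k+1) s. Then v_π k s = 1 for every k : ℕ and every s : S with g k s ≥ p; i.e., a policy that only takes unpruned actions reaches the accepting set with probability one. -/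
open Finset
open scoped Classical

/-- Theorem 1, Case (a): a policy taking only unpruned actions
(at every state with worst-case value at least `p`) reaches the accepting set
with probability one from any state `s` with `g k s ≥ p`.
Here `Act Δmin Δmax F p k s` is the pruned action set at remaining time `k+1`. -/
theorem unpruned_policy_surely_accepts {S A : Type*} [Fintype S] [Fintype A]
    [Nonempty S] [Nonempty A]
    (Δmin Δmax : S → A → S → ℝ)
    (hbounds : ∀ s a s', 0 ≤ Δmin s a s' ∧ Δmin s a s' ≤ Δmax s a s')
    (F : Finset S) (p : ℝ) (hp : 0 < p) (hp1 : p ≤ 1)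
    (Δ : S → A → S → ℝ) (hΔ : Admissible Δmin Δmax Δ)
    (π : ℕ → S → A)
    (hπ : ∀ (k : ℕ) (s : S), p ≤ gval Δmin Δmax F (k+1) s →
      π (k+1) s ∈ Act Δmin Δmax F p k s) :
    ∀ (k : ℕ) (s : S), p ≤ gval Δmin Δmax F k s → vpi Δ F π k s = 1 := by
  intro k
  induction k with
  | zero =>
    intro s hs
    by_cases h : s ∈ F
    · simp [vpi, h]
    · simp [gval, h] at hs; linarith
  | succ k ih =>
    intro s hs
    have hact := hπ k s hs
    simp only [vpi]
    have h1 : ∀ s' ∈ Finset.univ,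
        Δ s (π (k+1) s) s' * vpi Δ F π k s' = Δ s (π (k+1) s) s' := by
      intro s' _
      obtain ⟨h0, h01⟩ := hbounds s (π (k+1) s) s'
      have hΔ0 : 0 ≤ Δ s (π (k+1) s) s' := le_trans h0 ((hΔ s _).1 s').1
      rcases eq_or_lt_of_le hΔ0 with h | h
      · rw [← h]; ring
      · have hmax : 0 < Δmax s (π (k+1) s) s' := lt_of_lt_of_le h ((hΔ s _).1 s').2
        rw [ih s' (hact s' hmax)]; ring
    rw [Finset.sum_congr rfl h1]
    exact (hΔ s _).2
end

section
/- (Theorem 1) Let p ∈ (0,1], let Δ be an admissible kernel, let π_C be a κ-greedy policy, and let σ : ℕ → S → A be any action selection such that σ (k+1) s ∈ Act (k+1) s whenever Act (k+1) s is nonempty. Define the flagged success function w : ℕ → S → Bool → ℝ by: w 0 s b = 1 if s ∈ F and 0 otherwise; w (k+1) s true = ∑_{s'} Δ s (π_C (k+1) s) s' * w k s' true; and w (k+1) s false = ∑_{s'} Δ s (σ (k+1) s) s' * w k s' false if Act (k+1) s is nonempty, and w (k+1) s false = ∑_{s'} Δ s (π_C (k+1) s) s' * w k s' true if Act (k+1)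 s is empty. Then for all k : ℕ and s : S: (i) w k s true ≥ g k s, and (ii) if g k s ≥ p then w k s false ≥ p. In particular, the modified Q-learning agent, which explores using unpruned actions and permanently switches to the greedy policy π_C when no unpruned action exists, reaches the accepting set with probability at least p from any state whose worst-case value is at least p. -/
open Finset
open scoped Classical

/-- The flagged success function `w` of the modified Q-learning agent:
the Boolean flag records whether the agent has permanently switched to the
greedy policy `piC`; while unflagged it uses the exploration action `σ` as
long as the pruned action set (`Act (k+1) s`, i.e. `Act Δmin Δmax F p k s`)
is nonempty, and otherwise switches to `piC` (raising the flag). -/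
noncomputable def wfun {S A : Type*} [Fintype S] [Fintype A] [Nonempty A]
    (Δmin Δmax : S → A → S → ℝ) (F : Finset S) (p : ℝ)
    (Δ : S → A → S → ℝ) (piC σ : ℕ → S → A) : ℕ → S → Bool → ℝ
  | 0, s, _ => if s ∈ F then 1 else 0
  | (k+1), s, true =>
      ∑ s', Δ s (piC (k+1) s) s' * wfun Δmin Δmax F p Δ piC σ k s' true
  | (k+1), s, false =>
      if (Act Δmin Δmax F p k s).Nonempty then
        ∑ s', Δ s (σ (k+1) s) s' * wfun Δmin Δmax F p Δ piC σ k s' false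
      else
        ∑ s', Δ s (piC (k+1) s) s' * wfun Δmin Δmax F p Δ piC σ k s' true

section Aux

variable {S A : Type*} [Fintype S] [Fintype A] [Nonempty A]

lemma feas_nonneg {Δmin Δmax : S → A → S → ℝ}
    (hb : ∀ s a s', 0 ≤ Δmin s a s' ∧ Δmin s a s' ≤ Δmax s a s')
    {s : S} {a : A} {x : S → ℝ} (hx : x ∈ Feas Δmin Δmax s a) : ∀ s', 0 ≤ x s' :=
  fun s' => le_trans (hb s a s').1 (hx.1 s').1

lemma g_nonneg (Δmin Δmax : S → A → S → ℝ)
    (hb : ∀ s a s', 0 ≤ Δmin s a s' ∧ Δmin s a s' ≤ Δmax s a s')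
    (F : Finset S) : ∀ (k : ℕ) (s : S), 0 ≤ gval Δmin Δmax F k s := by
  intro k
  induction k with
  | zero => intro s; simp only [gval]; split <;> norm_num
  | succ k ih =>
    intro s
    have hκ : ∀ a : A, (0:ℝ) ≤ kappaOf Δmin Δmax (gval Δmin Δmax F k) s a := by
      intro a
      apply Real.sInf_nonneg
      rintro y ⟨x, hx, rfl⟩
      exact Finset.sum_nonneg fun s' _ => mul_nonneg (ih s') (feas_nonneg hb hx s')
    simp only [gval]
    exact le_trans (hκ (Classical.arbitrary A))
      (Finset.le_sup' _ (Finset.mem_univ _))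

lemma kappa_le_sum (Δmin Δmax : S → A → S → ℝ)
    {h : S → ℝ} (hh : ∀ s', 0 ≤ h s')
    (hb : ∀ s a s', 0 ≤ Δmin s a s' ∧ Δmin s a s' ≤ Δmax s a s')
    {Δ : S → A → S → ℝ} (hΔ : Admissible Δmin Δmax Δ) (s : S) (a : A) :
    kappaOf Δmin Δmax h s a ≤ ∑ s', h s' * Δ s a s' := by
  apply csInf_le
  · refine ⟨0, ?_⟩
    rintro y ⟨x, hx, rfl⟩
    exact Finset.sum_nonneg fun s' _ => mul_nonneg (hh s') (feas_nonneg hb hx s')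
  · exact ⟨Δ s a, hΔ s a, rfl⟩

end Aux

/-- Theorem 1: the modified Q-learning agent, exploring with
unpruned actions and permanently switching to the κ-greedy policy when no
unpruned action exists, satisfies (i) `w k s true ≥ g k s` and
(ii) `g k s ≥ p → w k s false ≥ p`. -/
theorem modified_q_learning_prob_ge {S A : Type*} [Fintype S] [Fintype A]
    [Nonempty S] [Nonempty A]
    (Δmin Δmax : S → A → S → ℝ)
    (hbounds : ∀ s a s', 0 ≤ Δmin s a s' ∧ Δmin s a s' ≤ Δmax s a s')
    (F : Finset S) (p : ℝ) (hp : 0 < p) (hp1 : p ≤ 1)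
    (Δ : S → A → S → ℝ) (hΔ : Admissible Δmin Δmax Δ)
    (piC : ℕ → S → A) (hgreedy : Greedy Δmin Δmax F piC)
    (σ : ℕ → S → A)
    (hσ : ∀ (k : ℕ) (s : S), (Act Δmin Δmax F p k s).Nonempty →
      σ (k+1) s ∈ Act Δmin Δmax F p k s) :
    ∀ (k : ℕ) (s : S),
      gval Δmin Δmax F k s ≤ wfun Δmin Δmax F p Δ piC σ k s true ∧
      (p ≤ gval Δmin Δmax F k s → p ≤ wfun Δmin Δmax F p Δ piC σ k s false) := by
  have hgnn := g_nonneg Δmin Δmax hbounds F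
  have hΔnn : ∀ s a s', 0 ≤ Δ s a s' := fun s a s' => feas_nonneg hbounds (hΔ s a) s'
  intro k
  induction k with
  | zero =>
    intro s
    constructor
    · simp [gval, wfun]
    · intro h
      simp only [gval] at h
      simpa [wfun] using h
  | succ k ih =>
    intro s
    have hw_true : ∀ a : A, kappa Δmin Δmax F k s a ≤
        ∑ s', Δ s a s' * wfun Δmin Δmax F p Δ piC σ k s' true := by
      intro a
      refine le_trans (kappa_le_sum Δmin Δmax (hgnn k) hbounds hΔ s a) ?_
      refine Finset.sum_le_sum fun s' _ => ?_
      rw [mul_comm]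
      exact mul_le_mul_of_nonneg_left (ih s').1 (hΔnn s a s')
    have hi : gval Δmin Δmax F (k+1) s ≤ wfun Δmin Δmax F p Δ piC σ (k+1) s true := by
      rw [← hgreedy k s]
      simpa [wfun] using hw_true (piC (k+1) s)
    refine ⟨hi, ?_⟩
    intro hpg
    by_cases hA : (Act Δmin Δmax F p k s).Nonempty
    · have ha := hσ k s hA
      have hw : wfun Δmin Δmax F p Δ piC σ (k+1) s false =
          ∑ s', Δ s (σ (k+1) s) s' * wfun Δmin Δmax F p Δ piC σ k s' false := by
        simp only [wfun, if_pos hA]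
      rw [hw]
      have hsum : ∑ s', Δ s (σ (k+1) s) s' = 1 := (hΔ s _).2
      have : p = ∑ s', Δ s (σ (k+1) s) s' * p := by
        rw [← Finset.sum_mul, hsum, one_mul]
      refine this.trans_le (Finset.sum_le_sum fun s' _ => ?_)
      by_cases hmax : 0 < Δmax s (σ (k+1) s) s'
      · exact mul_le_mul_of_nonneg_left ((ih s').2 (ha s' hmax)) (hΔnn _ _ _)
      · have h0 : Δ s (σ (k+1) s) s' = 0 :=
          le_antisymm (((hΔ s _).1 s').2.trans (not_lt.mp hmax)) (hΔnn _ _ _)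
        simp [h0]
    · have hw : wfun Δmin Δmax F p Δ piC σ (k+1) s false =
          wfun Δmin Δmax F p Δ piC σ (k+1) s true := by
        simp only [wfun, if_neg hA]
      rw [hw]
      exact hpg.trans hi
end
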